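/- Consider the decoupled LQ game where each player's decision variable is the open-loop action sequence u^i = (u^i_0,…,u^i_{t_f−1}) ∈ ℝ^{t_f} (instead of feedback gains), with states x^i_{t+1} = A^i x^i_t + b^i u^i_t and the same loss functions. If conditions (C1) and (C2) hold, then this open-loop game is an exact potential game. -/

import Mathlib

/-!
STATEMENT 9: The decoupled LQ game with open-loop information structure (each player's
decision variable is its action sequence `uⁱ ∈ ℝ^{t_f}`) is an exact potential game
whenever conditions (C1) and (C2) hold.
-/

open Matrix

/-- Open-loop state trajectory of a single player: `x_{t+1} = A x_t + u_t • b`. -/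
noncomputable def trajOL {ni : ℕ} (Ai : Matrix (Fin ni) (Fin ni) ℝ) (bi : Fin ni → ℝ)
    (x0i : Fin ni → ℝ) (tf : ℕ) (ui : Fin tf → ℝ) : ℕ → Fin ni → ℝ
  | 0 => x0i
  | t + 1 =>
      Ai.mulVec (trajOL Ai bi x0i tf ui t) +
        (if h : t < tf then ui ⟨t, h⟩ else 0) • bi

/-- Loss of player `i` in the decoupled LQ game with open-loop information structure. -/
noncomputable def lossJOL (N tf : ℕ) (n : Fin N → ℕ)
    (A : ∀ i, Matrix (Fin (n i)) (Fin (n i)) ℝ) (b : ∀ i, Fin (n i) → ℝ)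
    (x0 : ∀ i, Fin (n i) → ℝ)
    (Q : Fin N → Fin (tf + 1) →
      Matrix ((j : Fin N) × Fin (n j)) ((j : Fin N) × Fin (n j)) ℝ)
    (R : Fin N → Fin tf → Matrix (Fin N) (Fin N) ℝ)
    (M : Fin tf → ℝ) (d : Fin (tf + 1) → ((j : Fin N) × Fin (n j)) → ℝ)
    (i : Fin N) (u : Fin N → Fin tf → ℝ) : ℝ :=
  (∑ t : Fin (tf + 1),
      (fun p : (j : Fin N) × Fin (n j) =>
          trajOL (A p.1) (b p.1) (x0 p.1) tf (u p.1) (t : ℕ) p.2 - d t p) ⬝ᵥ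
        (Q i t).mulVec
          (fun p : (j : Fin N) × Fin (n j) =>
            trajOL (A p.1) (b p.1) (x0 p.1) tf (u p.1) (t : ℕ) p.2 - d t p)) +
    ∑ t : Fin tf,
      ((∑ j, ∑ h, u j t * R i t j h * u h t) + M t * u i t)


lemma sum_quad_diff {α : Type*} [Fintype α] (S S' : α → α → ℝ)
    (hS : ∀ p q, S p q = S q p) (hS' : ∀ p q, S' p q = S' q p)
    (P : α → Prop) [DecidablePred P]
    (hrow : ∀ p q, P p → S p q = S' p q)
    (y y' : α → ℝ) (hy : ∀ p, ¬ P p → y p = y' p) :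
    ((∑ p, ∑ q, y' p * S p q * y' q) - ∑ p, ∑ q, y p * S p q * y q)
      = (∑ p, ∑ q, y' p * S' p q * y' q) - ∑ p, ∑ q, y p * S' p q * y q := by
  rw [← Finset.sum_sub_distrib, ← Finset.sum_sub_distrib]
  refine Finset.sum_congr rfl fun p _ => ?_
  rw [← Finset.sum_sub_distrib, ← Finset.sum_sub_distrib]
  refine Finset.sum_congr rfl fun q _ => ?_
  by_cases hp : P p
  · rw [hrow p q hp]
  by_cases hq : P q
  · rw [hS p q, hrow q p hq, ← hS' p q]
  · rw [hy p hp, hy q hq]; ring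

lemma dot_mulVec_eq {α : Type*} [Fintype α] (S : Matrix α α ℝ) (y : α → ℝ) :
    y ⬝ᵥ S.mulVec y = ∑ p, ∑ q, y p * S p q * y q := by
  simp [dotProduct, Matrix.mulVec, Finset.mul_sum, mul_assoc]

theorem decoupled_lq_open_loop_potential_of_C1_C2
    (N tf : ℕ) (hN : 1 ≤ N) (htf : 1 ≤ tf)
    (n : Fin N → ℕ)
    (A : ∀ i, Matrix (Fin (n i)) (Fin (n i)) ℝ)
    (b : ∀ i, Fin (n i) → ℝ)
    (x0 : ∀ i, Fin (n i) → ℝ)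
    (Q : Fin N → Fin (tf + 1) →
      Matrix ((j : Fin N) × Fin (n j)) ((j : Fin N) × Fin (n j)) ℝ)
    (hQ : ∀ i t, (Q i t).PosSemidef)
    (R : Fin N → Fin tf → Matrix (Fin N) (Fin N) ℝ)
    (hRsymm : ∀ i t, (R i t).IsSymm)
    (hRown : ∀ i t, 0 < R i t i i)
    (hRother : ∀ i t l, l ≠ i → 0 ≤ R i t l l)
    (M : Fin tf → ℝ) (hM : ∀ t, 0 ≤ M t)
    (d : Fin (tf + 1) → ((j : Fin N) × Fin (n j)) → ℝ)
    (hC1 : ∀ i j, i ≠ j → ∀ (t : Fin (tf + 1)) (a : Fin (n i)) (c : Fin (n j)),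
      Q i t ⟨i, a⟩ ⟨j, c⟩ = Q j t ⟨i, a⟩ ⟨j, c⟩)
    (hC2 : ∀ i j, i ≠ j → ∀ t : Fin tf, R i t i j = R j t i j) :
    ∃ P : (Fin N → Fin tf → ℝ) → ℝ,
      ∀ (i : Fin N) (u : Fin N → Fin tf → ℝ) (ui' : Fin tf → ℝ),
        lossJOL N tf n A b x0 Q R M d i (Function.update u i ui') -
            lossJOL N tf n A b x0 Q R M d i u =
          P (Function.update u i ui') - P u := by

  classical
  refine ⟨fun u => (∑ t : Fin (tf + 1), ∑ p : (j : Fin N) × Fin (n j),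
      ∑ q : (j : Fin N) × Fin (n j),
      (trajOL (A p.1) (b p.1) (x0 p.1) tf (u p.1) (t : ℕ) p.2 - d t p) * Q p.1 t p q *
        (trajOL (A q.1) (b q.1) (x0 q.1) tf (u q.1) (t : ℕ) q.2 - d t q)) +
    ∑ t : Fin tf, ((∑ j, ∑ h, u j t * R j t j h * u h t) + ∑ j, M t * u j t), ?_⟩
  intro i u ui'
  set u' := Function.update u i ui' with hu'
  -- symmetry facts
  have hQsym : ∀ k (t : Fin (tf + 1)) p q, Q k t p q = Q k t q p := by
    intro k t p q
    simpa using ((hQ k t).1.apply p q).symm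
  have hRsym : ∀ k (t : Fin tf) j h, R k t j h = R k t h j := by
    intro k t j h
    exact (Matrix.IsSymm.apply (hRsymm k t) j h).symm
  have hQpotsym : ∀ (t : Fin (tf + 1)) (p q : (j : Fin N) × Fin (n j)),
      Q p.1 t p q = Q q.1 t q p := by
    rintro t ⟨pi, pa⟩ ⟨qi, qa⟩
    by_cases h : pi = qi
    · subst h; exact hQsym pi t _ _
    · calc Q pi t ⟨pi, pa⟩ ⟨qi, qa⟩ = Q qi t ⟨pi, pa⟩ ⟨qi, qa⟩ := hC1 pi qi h t pa qa
        _ = Q qi t ⟨qi, qa⟩ ⟨pi, pa⟩ := hQsym qi t _ _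
  have hRpotsym : ∀ (t : Fin tf) (j h : Fin N), R j t j h = R h t h j := by
    intro t j h
    by_cases hjh : j = h
    · subst hjh; rfl
    · rw [hC2 j h hjh t, hRsym h t j h]
  have hyagree : ∀ (t : ℕ) (p : (j : Fin N) × Fin (n j)), ¬ p.1 = i →
      trajOL (A p.1) (b p.1) (x0 p.1) tf (u p.1) t p.2 =
      trajOL (A p.1) (b p.1) (x0 p.1) tf (u' p.1) t p.2 := by
    intro t p hp
    rw [hu', Function.update_of_ne hp]
  -- state-cost difference
  have hstate : ∀ t : Fin (tf + 1),
      ((∑ p : (j : Fin N) × Fin (n j), ∑ q : (j : Fin N) × Fin (n j),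
        (trajOL (A p.1) (b p.1) (x0 p.1) tf (u' p.1) (t : ℕ) p.2 - d t p) * Q i t p q *
          (trajOL (A q.1) (b q.1) (x0 q.1) tf (u' q.1) (t : ℕ) q.2 - d t q)) -
       ∑ p : (j : Fin N) × Fin (n j), ∑ q : (j : Fin N) × Fin (n j),
        (trajOL (A p.1) (b p.1) (x0 p.1) tf (u p.1) (t : ℕ) p.2 - d t p) * Q i t p q *
          (trajOL (A q.1) (b q.1) (x0 q.1) tf (u q.1) (t : ℕ) q.2 - d t q))
      = ((∑ p : (j : Fin N) × Fin (n j), ∑ q : (j : Fin N) × Fin (n j),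
        (trajOL (A p.1) (b p.1) (x0 p.1) tf (u' p.1) (t : ℕ) p.2 - d t p) * Q p.1 t p q *
          (trajOL (A q.1) (b q.1) (x0 q.1) tf (u' q.1) (t : ℕ) q.2 - d t q)) -
       ∑ p : (j : Fin N) × Fin (n j), ∑ q : (j : Fin N) × Fin (n j),
        (trajOL (A p.1) (b p.1) (x0 p.1) tf (u p.1) (t : ℕ) p.2 - d t p) * Q p.1 t p q *
          (trajOL (A q.1) (b q.1) (x0 q.1) tf (u q.1) (t : ℕ) q.2 - d t q)) := by
    intro t
    refine sum_quad_diff (fun p q => Q i t p q) (fun p q => Q p.1 t p q)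
      (fun p q => hQsym i t p q) (fun p q => hQpotsym t p q)
      (fun p => p.1 = i)
      (fun p q hp => ?_)
      (fun p => trajOL (A p.1) (b p.1) (x0 p.1) tf (u p.1) (t : ℕ) p.2 - d t p)
      (fun p => trajOL (A p.1) (b p.1) (x0 p.1) tf (u' p.1) (t : ℕ) p.2 - d t p)
      (fun p hp => by rw [hyagree (t : ℕ) p hp])
    · rcases p with ⟨pi, pa⟩
      dsimp only at hp
      subst hp
      rfl
  -- control-cost difference
  have hctrl : ∀ t : Fin tf,
      (((∑ j, ∑ h, u' j t * R i t j h * u' h t) + M t * u' i t) -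
       ((∑ j, ∑ h, u j t * R i t j h * u h t) + M t * u i t))
      = (((∑ j, ∑ h, u' j t * R j t j h * u' h t) + ∑ j, M t * u' j t) -
       ((∑ j, ∑ h, u j t * R j t j h * u h t) + ∑ j, M t * u j t)) := by
    intro t
    have hquad := sum_quad_diff (fun j h => R i t j h) (fun j h => R j t j h)
      (fun j h => hRsym i t j h) (fun j h => hRpotsym t j h)
      (fun j => j = i)
      (fun j h hj => by subst hj; rfl)
      (fun j => u j t) (fun j => u' j t)
      (fun j hj => by rw [hu', Function.update_of_ne hj])
    have hM' : (∑ j, M t * u' j t) - ∑ j, M t * u j t = M t * u' i t - M t * u i t := by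
      rw [← Finset.sum_sub_distrib]
      rw [Finset.sum_eq_single i]
      · intro j _ hj
        rw [hu', Function.update_of_ne hj, sub_self]
      · intro h; exact absurd (Finset.mem_univ i) h
    linarith
  -- combine
  unfold lossJOL
  have h1 : (∑ t : Fin (tf + 1),
      (fun p : (j : Fin N) × Fin (n j) =>
          trajOL (A p.1) (b p.1) (x0 p.1) tf (u' p.1) (t : ℕ) p.2 - d t p) ⬝ᵥ
        (Q i t).mulVec
          (fun p : (j : Fin N) × Fin (n j) =>
            trajOL (A p.1) (b p.1) (x0 p.1) tf (u' p.1) (t : ℕ) p.2 - d t p)) -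
      (∑ t : Fin (tf + 1),
      (fun p : (j : Fin N) × Fin (n j) =>
          trajOL (A p.1) (b p.1) (x0 p.1) tf (u p.1) (t : ℕ) p.2 - d t p) ⬝ᵥ
        (Q i t).mulVec
          (fun p : (j : Fin N) × Fin (n j) =>
            trajOL (A p.1) (b p.1) (x0 p.1) tf (u p.1) (t : ℕ) p.2 - d t p)) =
      (∑ t : Fin (tf + 1), ∑ p : (j : Fin N) × Fin (n j),
      ∑ q : (j : Fin N) × Fin (n j),
      (trajOL (A p.1) (b p.1) (x0 p.1) tf (u' p.1) (t : ℕ) p.2 - d t p) * Q p.1 t p q *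
        (trajOL (A q.1) (b q.1) (x0 q.1) tf (u' q.1) (t : ℕ) q.2 - d t q)) -
      (∑ t : Fin (tf + 1), ∑ p : (j : Fin N) × Fin (n j),
      ∑ q : (j : Fin N) × Fin (n j),
      (trajOL (A p.1) (b p.1) (x0 p.1) tf (u p.1) (t : ℕ) p.2 - d t p) * Q p.1 t p q *
        (trajOL (A q.1) (b q.1) (x0 q.1) tf (u q.1) (t : ℕ) q.2 - d t q)) := by
    simp only [dot_mulVec_eq]
    rw [← Finset.sum_sub_distrib, ← Finset.sum_sub_distrib]
    exact Finset.sum_congr rfl fun t _ => hstate t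
  have h2 : (∑ t : Fin tf, ((∑ j, ∑ h, u' j t * R i t j h * u' h t) + M t * u' i t)) -
      (∑ t : Fin tf, ((∑ j, ∑ h, u j t * R i t j h * u h t) + M t * u i t)) =
      (∑ t : Fin tf, ((∑ j, ∑ h, u' j t * R j t j h * u' h t) + ∑ j, M t * u' j t)) -
      (∑ t : Fin tf, ((∑ j, ∑ h, u j t * R j t j h * u h t) + ∑ j, M t * u j t)) := by
    rw [← Finset.sum_sub_distrib, ← Finset.sum_sub_distrib]
    exact Finset.sum_congr rfl fun t _ => hctrl t
  dsimp only
  linarith
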